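/- arXiv:2407.04227 — 2 statements merged into one kernel-verified Lean document; each statement's English description precedes it below -/
import Mathlib

section
/- With the setup of Proposition 1 (box $B = \prod_i [l_i,u_i]$, function $f$, mapping $\Phi$ with $f_i(x)=0 \iff x_i = \Phi_i(x)$, and $\widehat{\Phi}$ defined via projections and boundary cases), suppose additionally that $\Phi$ and $f$ are continuous, that $\limsup_{x_i \to l_i^+,\, f_i(x) \le 0} \Phi_i(x) \le l_i$, and that $\liminf_{x_i \to u_i^-,\, f_i(x) \ge 0} \Phi_i(x) \ge u_i$. Then $\widehat{\Phi}$ is a continuous function on $B$. -/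
/-!
At a point where coordinate `i` is not active (neither `f_i ≤ 0, x_i = l_i` nor
`f_i ≥ 0, x_i = u_i`), both activity conditions fail on a neighbourhood, so `Φ̂_i` agrees there
with the continuous clamp of `Φ_i`. At a lower-active point `Φ̂_i = l_i`, and nearby `Φ̂_i` lies
between `l_i` and `max l_i Φ_i`; the limsup hypothesis (when `f_i < 0`) or the fixed-point
relation `Φ_i = x_i = l_i` (when `f_i = 0`) pushes `Φ_i` below `l_i + ε`. The upper-active case is
the mirror image under `x ↦ -x`.
-/

open Filter Topology

/-- `Φ̂_i(x) = phiHat (l i) (u i) (x i) (f x i) (Φ x i)`. -/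
noncomputable def phiHat (l u a F P : ℝ) : ℝ :=
  if F ≤ 0 ∧ a = l then l else if 0 ≤ F ∧ a = u then u else max l (min u P)

section phiHat

variable {l u a F P : ℝ}

lemma le_phiHat (hlu : l ≤ u) : l ≤ phiHat l u a F P := by
  unfold phiHat
  split_ifs
  exacts [le_rfl, hlu, le_max_left _ _]

lemma phiHat_le_max (ha : a ≠ u) : phiHat l u a F P ≤ max l P := by
  unfold phiHat
  split_ifs with _ hu
  · exact le_max_left _ _
  · exact absurd hu.2 ha
  · exact max_le_max le_rfl (min_le_right _ _)

lemma phiHat_of_not_active (hl : ¬(F ≤ 0 ∧ a = l)) (hu : ¬(0 ≤ F ∧ a = u)) :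
    phiHat l u a F P = max l (min u P) := by
  rw [phiHat, if_neg hl, if_neg hu]

lemma phiHat_neg (hlu : l < u) : phiHat (-u) (-l) (-a) (-F) (-P) = -phiHat l u a F P := by
  unfold phiHat
  simp only [neg_nonpos, neg_nonneg, neg_inj, max_neg_neg, min_neg_neg]
  split_ifs with hu hl hl
  · linarith [hu.2.symm.trans hl.2]
  · rfl
  · rfl
  · rw [neg_inj, max_min_distrib_left, max_eq_right hlu.le]

end phiHat

section continuity

variable {X : Type*} [TopologicalSpace X] {B : Set X} {x₀ : X} {l u : ℝ} {a F P : X → ℝ}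

lemma eventually_lt_of_limsup_le (hF : ContinuousWithinAt F B x₀) (hP : ContinuousWithinAt P B x₀)
    (hfix : F x₀ = 0 → P x₀ = l) (hF₀ : F x₀ ≤ 0)
    (hlim : ∀ ε > 0, ∀ᶠ x in 𝓝[B] x₀, F x ≤ 0 → P x ≤ l + ε) {b : ℝ} (hb : l < b) :
    ∀ᶠ x in 𝓝[B] x₀, P x < b := by
  rcases hF₀.lt_or_eq with hneg | hzero
  · filter_upwards [hlim ((b - l) / 2) (by linarith), hF.eventually_lt_const hneg] with x hPx hFx
    linarith [hPx hFx.le]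
  · exact hP.eventually_lt_const (hfix hzero ▸ hb)

lemma continuousWithinAt_phiHat_of_lower_active (hlu : l < u) (ha : ContinuousWithinAt a B x₀)
    (hF : ContinuousWithinAt F B x₀) (hP : ContinuousWithinAt P B x₀)
    (hfix : F x₀ = 0 → a x₀ = P x₀) (hF₀ : F x₀ ≤ 0) (ha₀ : a x₀ = l)
    (hlim : ∀ ε > 0, ∀ᶠ x in 𝓝[B] x₀, F x ≤ 0 → P x ≤ l + ε) :
    ContinuousWithinAt (fun x ↦ phiHat l u (a x) (F x) (P x)) B x₀ := by
  rw [ContinuousWithinAt, phiHat, if_pos ⟨hF₀, ha₀⟩]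
  refine tendsto_order.2 ⟨fun b hb ↦ .of_forall fun x ↦ hb.trans_le (le_phiHat hlu.le),
    fun b hb ↦ ?_⟩
  have hPb := eventually_lt_of_limsup_le hF hP (fun h ↦ (hfix h).symm.trans ha₀) hF₀ hlim hb
  filter_upwards [hPb, ha.eventually_lt_const (ha₀ ▸ hlu)] with x hPx hax
  exact (phiHat_le_max hax.ne).trans_lt (max_lt hb hPx)

lemma eventually_not_lower_active (ha : ContinuousWithinAt a B x₀)
    (hF : ContinuousWithinAt F B x₀) (h₀ : ¬(F x₀ ≤ 0 ∧ a x₀ = l)) :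
    ∀ᶠ x in 𝓝[B] x₀, ¬(F x ≤ 0 ∧ a x = l) := by
  rw [not_and_or, not_le] at h₀
  rcases h₀ with hpos | hne
  · filter_upwards [hF.eventually_const_lt hpos] with x hx using fun h ↦ hx.not_ge h.1
  · filter_upwards [ha.eventually_ne hne] with x hx using fun h ↦ hx h.2

theorem continuousWithinAt_phiHat (hlu : l < u) (ha : ContinuousWithinAt a B x₀)
    (hF : ContinuousWithinAt F B x₀) (hP : ContinuousWithinAt P B x₀)
    (hfix : F x₀ = 0 → a x₀ = P x₀)
    (hlo : a x₀ = l → F x₀ ≤ 0 → ∀ ε > 0, ∀ᶠ x in 𝓝[B] x₀, F x ≤ 0 → P x ≤ l + ε)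
    (hup : a x₀ = u → 0 ≤ F x₀ → ∀ ε > 0, ∀ᶠ x in 𝓝[B] x₀, 0 ≤ F x → u - ε ≤ P x) :
    ContinuousWithinAt (fun x ↦ phiHat l u (a x) (F x) (P x)) B x₀ := by
  by_cases hl : F x₀ ≤ 0 ∧ a x₀ = l
  · exact continuousWithinAt_phiHat_of_lower_active hlu ha hF hP hfix hl.1 hl.2 (hlo hl.2 hl.1)
  by_cases hu : 0 ≤ F x₀ ∧ a x₀ = u
  · have hneg := continuousWithinAt_phiHat_of_lower_active (neg_lt_neg hlu) ha.neg hF.neg hP.neg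
      (by simpa [neg_eq_zero] using hfix) (neg_nonpos.2 hu.1) (neg_inj.2 hu.2)
      fun ε hε ↦ (hup hu.2 hu.1 ε hε).mono fun x h hFx ↦ by
        simp only [Pi.neg_apply, neg_nonpos] at hFx ⊢; linarith [h hFx]
    simpa only [Pi.neg_apply, phiHat_neg hlu, Pi.neg_def, neg_neg] using hneg.neg
  have hev : ∀ᶠ x in 𝓝[B] x₀, phiHat l u (a x) (F x) (P x) = max l (min u (P x)) := by
    have hu' := eventually_not_lower_active (l := -u) ha.neg hF.neg (by simpa using hu)
    filter_upwards [eventually_not_lower_active ha hF hl, hu'] with x hlx hux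
    exact phiHat_of_not_active hlx (by simpa using hux)
  have hclamp : Continuous fun t : ℝ ↦ max l (min u t) := by fun_prop
  exact (hclamp.continuousAt.comp_continuousWithinAt hP).congr_of_eventuallyEq hev
    (phiHat_of_not_active hl hu)

end continuity

lemma eventually_nhdsWithin_of_dist_lt {X : Type*} [PseudoMetricSpace X] {B : Set X} {x₀ : X}
    {p : X → Prop} {δ : ℝ} (hδ : 0 < δ) (h : ∀ x ∈ B, dist x x₀ < δ → p x) :
    ∀ᶠ x in 𝓝[B] x₀, p x :=
  Metric.mem_nhdsWithin_iff.2 ⟨δ, hδ, fun x hx ↦ h x hx.2 hx.1⟩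

theorem stmt1_general (I : ℕ) (l u : Fin I → ℝ) (hlu : ∀ i, l i < u i)
    (f Φ : (Fin I → ℝ) → Fin I → ℝ)
    (B : Set (Fin I → ℝ))
    (hΦ : ∀ x ∈ B, ∀ i, f x i = 0 ↔ x i = Φ x i)
    (Φhat : (Fin I → ℝ) → Fin I → ℝ)
    (hΦhat : ∀ x ∈ B, ∀ i, Φhat x i =
      if f x i ≤ 0 ∧ x i = l i then l i
      else if 0 ≤ f x i ∧ x i = u i then u i
      else max (l i) (min (u i) (Φ x i)))
    (hfc : ContinuousOn f B) (hΦc : ContinuousOn Φ B)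
    (hliml : ∀ i, ∀ x₀ ∈ B, x₀ i = l i → f x₀ i ≤ 0 →
      ∀ ε > 0, ∃ δ > 0, ∀ x ∈ B, f x i ≤ 0 → dist x x₀ < δ → Φ x i ≤ l i + ε)
    (hlimu : ∀ i, ∀ x₀ ∈ B, x₀ i = u i → 0 ≤ f x₀ i →
      ∀ ε > 0, ∃ δ > 0, ∀ x ∈ B, 0 ≤ f x i → dist x x₀ < δ → u i - ε ≤ Φ x i) :
    ContinuousOn Φhat B := by
  refine ContinuousOn.congr ?_ fun x hx ↦ funext (hΦhat x hx)
  refine continuousOn_pi.2 fun i x₀ hx₀ ↦ continuousWithinAt_phiHat (hlu i)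
    (continuous_apply i).continuousWithinAt (continuousOn_pi.1 hfc i x₀ hx₀)
    (continuousOn_pi.1 hΦc i x₀ hx₀) (hΦ x₀ hx₀ i).1 (fun ha hf ε hε ↦ ?_) (fun ha hf ε hε ↦ ?_)
  · obtain ⟨δ, hδ, h⟩ := hliml i x₀ hx₀ ha hf ε hε
    exact eventually_nhdsWithin_of_dist_lt hδ fun x hx hd hfx ↦ h x hx hfx hd
  · obtain ⟨δ, hδ, h⟩ := hlimu i x₀ hx₀ ha hf ε hε
    exact eventually_nhdsWithin_of_dist_lt hδ fun x hx hd hfx ↦ h x hx hfx hd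

/-- Proposition 2: continuity of the projected map `Φhat` on the box `B`. -/
theorem stmt1 (I : ℕ) (l u : Fin I → ℝ) (hlu : ∀ i, l i < u i)
    (f Φ : (Fin I → ℝ) → Fin I → ℝ)
    (B : Set (Fin I → ℝ)) (hB : B = {x | ∀ i, x i ∈ Set.Icc (l i) (u i)})
    (hΦ : ∀ x ∈ B, ∀ i, f x i = 0 ↔ x i = Φ x i)
    (Φhat : (Fin I → ℝ) → Fin I → ℝ)
    (hΦhat : ∀ x ∈ B, ∀ i, Φhat x i =
      if f x i ≤ 0 ∧ x i = l i then l i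
      else if 0 ≤ f x i ∧ x i = u i then u i
      else max (l i) (min (u i) (Φ x i)))
    (hfc : ContinuousOn f B) (hΦc : ContinuousOn Φ B)
    (hliml : ∀ i, ∀ x₀ ∈ B, x₀ i = l i → f x₀ i ≤ 0 →
      ∀ ε > 0, ∃ δ > 0, ∀ x ∈ B, f x i ≤ 0 → dist x x₀ < δ → Φ x i ≤ l i + ε)
    (hlimu : ∀ i, ∀ x₀ ∈ B, x₀ i = u i → 0 ≤ f x₀ i →
      ∀ ε > 0, ∃ δ > 0, ∀ x ∈ B, 0 ≤ f x i → dist x x₀ < δ → u i - ε ≤ Φ x i) :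
    ContinuousOn Φhat B :=
  stmt1_general I l u hlu f Φ B hΦ Φhat hΦhat hfc hΦc hliml hlimu
end

section
/- Under the hypotheses of the multi-agent envelope condition (Bellman identity, first-order condition, and differentiability as above), the Euler equation holds: $0 = -c'\big(k_j' - (1-\delta)k_j\big) + \beta \frac{\partial \pi_j}{\partial k_j'}(k_j', k_{-j}') + \beta(1-\delta) c'\big(k_j'' - (1-\delta)k_j'\big) + \beta^2 \frac{\partial k_{-j}''}{\partial k_j'} \cdot \frac{\partial V_j}{\partial k_{-j}''}(k_j'', k_{-j}'')$, where $k'' = (k_j''(k'), k_{-j}''(k'))$ denotes the policy applied to next-period state $k'$. -/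
/-- Partial derivative with respect to the first coordinate. -/
noncomputable def pd1 (F : ℝ × ℝ → ℝ) (p : ℝ × ℝ) : ℝ :=
  deriv (fun t => F (t, p.2)) p.1

/-- Partial derivative with respect to the second coordinate. -/
noncomputable def pd2 (F : ℝ × ℝ → ℝ) (p : ℝ × ℝ) : ℝ :=
  deriv (fun t => F (p.1, t)) p.2

/-!
Differentiating the Bellman identity in `k_j` and using the first-order condition to cancel every
term carrying `∂k_j'/∂k_j` gives the envelope condition
`∂V/∂k_j = ∂π/∂k_j + (1 - δ) c' + β (∂k_{-j}'/∂k_j) ∂V/∂k_{-j}`.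
Evaluated at `k'` and substituted into the first-order condition, it is the Euler equation.
-/

section PartialDerivatives

variable {F : ℝ × ℝ → ℝ} {p : ℝ × ℝ}

theorem DifferentiableAt.hasDerivAt_pd1 (hF : DifferentiableAt ℝ F p) :
    HasDerivAt (fun t => F (t, p.2)) (pd1 F p) p.1 :=
  (hF.comp p.1 (differentiableAt_id.prodMk (differentiableAt_const _))).hasDerivAt

theorem DifferentiableAt.hasDerivAt_pd2 (hF : DifferentiableAt ℝ F p) :
    HasDerivAt (fun t => F (p.1, t)) (pd2 F p) p.2 :=
  (hF.comp p.2 ((differentiableAt_const _).prodMk differentiableAt_id)).hasDerivAt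

theorem DifferentiableAt.pd1_eq_fderiv (hF : DifferentiableAt ℝ F p) :
    pd1 F p = fderiv ℝ F p (1, 0) :=
  hF.hasDerivAt_pd1.unique
    (hF.hasFDerivAt.comp_hasDerivAt p.1 ((hasDerivAt_id _).prodMk (hasDerivAt_const _ _)))

theorem DifferentiableAt.pd2_eq_fderiv (hF : DifferentiableAt ℝ F p) :
    pd2 F p = fderiv ℝ F p (0, 1) :=
  hF.hasDerivAt_pd2.unique
    (hF.hasFDerivAt.comp_hasDerivAt p.2 ((hasDerivAt_const _ _).prodMk (hasDerivAt_id _)))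

theorem DifferentiableAt.hasDerivAt_comp_prodMk {f g : ℝ → ℝ} {f' g' x : ℝ}
    (hF : DifferentiableAt ℝ F (f x, g x)) (hf : HasDerivAt f f' x) (hg : HasDerivAt g g' x) :
    HasDerivAt (fun t => F (f t, g t))
      (f' * pd1 F (f x, g x) + g' * pd2 F (f x, g x)) x := by
  have hsplit : ((f', g') : ℝ × ℝ) = f' • ((1 : ℝ), (0 : ℝ)) + g' • ((0 : ℝ), (1 : ℝ)) := by
    simp
  refine (hF.hasFDerivAt.comp_hasDerivAt x (hf.prodMk hg)).congr_deriv ?_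
  rw [hF.pd1_eq_fderiv, hF.pd2_eq_fderiv, hsplit, map_add, map_smul, map_smul, smul_eq_mul,
    smul_eq_mul]

end PartialDerivatives

section BellmanEquation

variable {β δ : ℝ} {V π : ℝ × ℝ → ℝ} {c : ℝ → ℝ} {kj' km' : ℝ × ℝ → ℝ}

theorem pd1_profit_of_bellman (hV : Differentiable ℝ V) (hc : Differentiable ℝ c)
    (hkj : Differentiable ℝ kj') (hkm : Differentiable ℝ km')
    (hBell : ∀ p : ℝ × ℝ,
      V p = π p - c (kj' p - (1 - δ) * p.1) + β * V (kj' p, km' p))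
    (q : ℝ × ℝ) :
    pd1 π q = pd1 V q + deriv c (kj' q - (1 - δ) * q.1) * (pd1 kj' q - (1 - δ))
      - β * (pd1 kj' q * pd1 V (kj' q, km' q) + pd1 km' q * pd2 V (kj' q, km' q)) := by
  have hkjd := (hkj q).hasDerivAt_pd1
  have hinvest : HasDerivAt (fun t => kj' (t, q.2) - (1 - δ) * t)
      (pd1 kj' q - (1 - δ)) q.1 := by
    simpa using hkjd.fun_sub ((hasDerivAt_id' q.1).const_mul (1 - δ))
  have hπ : (fun t => π (t, q.2)) = fun t => V (t, q.2) + c (kj' (t, q.2) - (1 - δ) * t)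
      - β * V (kj' (t, q.2), km' (t, q.2)) := by
    funext t
    linear_combination -hBell (t, q.2)
  have hderiv := ((hV q).hasDerivAt_pd1.add ((hc _).hasDerivAt.comp q.1 hinvest)).sub
    (((hV _).hasDerivAt_comp_prodMk hkjd (hkm q).hasDerivAt_pd1).const_mul β)
  rw [pd1, hπ]
  exact hderiv.deriv

theorem envelope_condition (hV : Differentiable ℝ V) (hc : Differentiable ℝ c)
    (hkj : Differentiable ℝ kj') (hkm : Differentiable ℝ km')
    (hBell : ∀ p : ℝ × ℝ,
      V p = π p - c (kj' p - (1 - δ) * p.1) + β * V (kj' p, km' p))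
    (hFOC : ∀ p : ℝ × ℝ,
      -deriv c (kj' p - (1 - δ) * p.1) + β * pd1 V (kj' p, km' p) = 0)
    (q : ℝ × ℝ) :
    pd1 V q = pd1 π q + (1 - δ) * deriv c (kj' q - (1 - δ) * q.1)
      + β * pd1 km' q * pd2 V (kj' q, km' q) := by
  rw [pd1_profit_of_bellman hV hc hkj hkm hBell q]
  linear_combination pd1 kj' q * hFOC q

end BellmanEquation

theorem stmt10_general (β δ : ℝ) (V π : ℝ × ℝ → ℝ) (c : ℝ → ℝ) (kj' km' : ℝ × ℝ → ℝ)
    (hV : Differentiable ℝ V)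
    (hc : Differentiable ℝ c)
    (hkj : Differentiable ℝ kj') (hkm : Differentiable ℝ km')
    (hBell : ∀ p : ℝ × ℝ,
      V p = π p - c (kj' p - (1 - δ) * p.1) + β * V (kj' p, km' p))
    (hFOC : ∀ p : ℝ × ℝ,
      -deriv c (kj' p - (1 - δ) * p.1) + β * pd1 V (kj' p, km' p) = 0) :
    ∀ p : ℝ × ℝ,
      0 = -deriv c (kj' p - (1 - δ) * p.1)
        + β * pd1 π (kj' p, km' p)
        + β * (1 - δ) * deriv c (kj' (kj' p, km' p) - (1 - δ) * kj' p)
        + β ^ 2 * pd1 km' (kj' p, km' p)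
          * pd2 V (kj' (kj' p, km' p), km' (kj' p, km' p)) := by
  intro p
  have henv := envelope_condition hV hc hkj hkm hBell hFOC (kj' p, km' p)
  linear_combination -hFOC p + β * henv

/-- Euler equation in the multi-agent dynamic investment game. -/
theorem stmt10 (β δ : ℝ) (V π : ℝ × ℝ → ℝ) (c : ℝ → ℝ) (kj' km' : ℝ × ℝ → ℝ)
    (hV : Differentiable ℝ V) (hπ : Differentiable ℝ π)
    (hc : Differentiable ℝ c)
    (hkj : Differentiable ℝ kj') (hkm : Differentiable ℝ km')
    (hBell : ∀ p : ℝ × ℝ,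
      V p = π p - c (kj' p - (1 - δ) * p.1) + β * V (kj' p, km' p))
    (hFOC : ∀ p : ℝ × ℝ,
      -deriv c (kj' p - (1 - δ) * p.1) + β * pd1 V (kj' p, km' p) = 0) :
    ∀ p : ℝ × ℝ,
      0 = -deriv c (kj' p - (1 - δ) * p.1)
        + β * pd1 π (kj' p, km' p)
        + β * (1 - δ) * deriv c (kj' (kj' p, km' p) - (1 - δ) * kj' p)
        + β ^ 2 * pd1 km' (kj' p, km' p)
          * pd2 V (kj' (kj' p, km' p), km' (kj' p, km' p)) :=
  stmt10_general β δ V π c kj' km' hV hc hkj hkm hBell hFOC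
end
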